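/- Fix p ≥ 3 and g ∈ 𝒢_a. Then ℐ_p(g)² ≤ 𝒥_p(g). Moreover, equality holds if and only if there exist constants C > 0 and κ ∈ ℝ such that g(t) = C·exp(κ·arcsin t) for all t ∈ [−1,1]. -/

import Mathlib

open MeasureTheory Matrix Real Filter Set ProbabilityTheory
open scoped RealInnerProductSpace BigOperators ENNReal NNReal Topology

noncomputable section

/-- `ℝ^q` with the Euclidean structure. -/
abbrev Euc (q : ℕ) := EuclideanSpace ℝ (Fin q)

/-- A function `Fin q → ℝ` viewed as a Euclidean vector. -/
def eucOf {q : ℕ} (v : Fin q → ℝ) : Euc q := WithLp.toLp 2 v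

/-- The surface-area measure on the unit sphere of `ℝ^q`, viewed as a measure on `ℝ^q`. -/
def sphereMeasure (q : ℕ) : Measure (Euc q) :=
  Measure.map (Subtype.val) ((volume : Measure (Euc q)).toSphere)

/-- `ω_q = 2 π^{q/2} / Γ(q/2)`, the surface area of the unit sphere in `ℝ^q`. -/
def omegaS (q : ℕ) : ℝ := 2 * Real.pi ^ ((q : ℝ) / 2) / Real.Gamma ((q : ℝ) / 2)

/-- A matrix applied to a Euclidean vector. -/
def mulVecE {m q : ℕ} (A : Matrix (Fin m) (Fin q) ℝ) (v : Euc q) : Euc m :=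
  eucOf (A.mulVec (fun i => v i))

/-- The multivariate sign `u_θ(x) = Γ_θᵀ x / ‖Γ_θᵀ x‖`. -/
def uSign {p : ℕ} (Γ : Matrix (Fin p) (Fin (p - 1)) ℝ) (x : Euc p) : Euc (p - 1) :=
  ‖mulVecE Γᵀ x‖⁻¹ • mulVecE Γᵀ x

/-- An angular function for dimension `p`. -/
structure AngFn (p : ℕ) where
  g : ℝ → ℝ
  meas : Measurable g
  nonneg : ∀ v ∈ Set.Icc (-1 : ℝ) 1, 0 ≤ g v
  integrable : IntegrableOn (fun v => (1 - v ^ 2) ^ (((p : ℝ) - 3) / 2) * g v) (Set.Ioo (-1) 1)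
  pos : 0 < ∫ v in Set.Ioo (-1 : ℝ) 1, (1 - v ^ 2) ^ (((p : ℝ) - 3) / 2) * g v

/-- The normalizing constant `c_{p,g}`. -/
def cpg (p : ℕ) (G : AngFn p) : ℝ :=
  (omegaS (p - 1) * ∫ v in Set.Ioo (-1 : ℝ) 1, (1 - v ^ 2) ^ (((p : ℝ) - 3) / 2) * G.g v)⁻¹

/-- The density `g̃_p` of the cosine `v_θ(X)`. -/
def gtilde (p : ℕ) (G : AngFn p) (v : ℝ) : ℝ :=
  omegaS (p - 1) * cpg p G * (1 - v ^ 2) ^ (((p : ℝ) - 3) / 2) * G.g v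

/-- The rotationally symmetric distribution `P_{θ,g}` on the unit sphere of `ℝ^p`. -/
def rotSymmLaw (p : ℕ) (θ : Euc p) (G : AngFn p) : Measure (Euc p) :=
  (sphereMeasure p).withDensity (fun x => ENNReal.ofReal (cpg p G * G.g (⟪x, θ⟫)))

/-- The quadratic form `u ↦ uᵀ A u`. -/
def quadForm {m : ℕ} (A : Matrix (Fin m) (Fin m) ℝ) (u : Euc m) : ℝ :=
  (fun i => u i) ⬝ᵥ A.mulVec (fun i => u i)

/-- The angular central Gaussian normalizing constant. -/
def cACG (p : ℕ) (Λ : Matrix (Fin (p - 1)) (Fin (p - 1)) ℝ) : ℝ :=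
  (omegaS (p - 1) * Real.sqrt Λ.det)⁻¹

/-- The vMF normalizing constant on `𝒮^{p-2}`. -/
def cvMF (p : ℕ) (μ : Euc (p - 1)) (κ : ℝ) : ℝ :=
  (∫ u, Real.exp (κ * ⟪μ, u⟫) ∂(sphereMeasure (p - 1)))⁻¹

/-- Members of the class `𝒢_a`. -/
structure GaFn (p : ℕ) extends AngFn p where
  gpos : ∀ v ∈ Set.Icc (-1 : ℝ) 1, 0 < g v
  dg : ℝ → ℝ
  dg_meas : Measurable dg
  dg_intervalIntegrable : IntervalIntegrable dg volume (-1) 1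
  abs_cont : ∀ x ∈ Set.Icc (-1 : ℝ) 1, g x = g (-1) + ∫ t in (-1 : ℝ)..x, dg t
  nonconst : ∃ x ∈ Set.Icc (-1 : ℝ) 1, ∃ y ∈ Set.Icc (-1 : ℝ) 1, g x ≠ g y
  score_sq_integrable : IntegrableOn
    (fun t => (dg t / g t) ^ 2 * (1 - t ^ 2) * ((1 - t ^ 2) ^ (((p : ℝ) - 3) / 2) * g t))
    (Set.Ioo (-1) 1)

/-- `𝒥_p(g)`. -/
def scoreJ (p : ℕ) (G : GaFn p) : ℝ :=
  ∫ t in Set.Ioo (-1 : ℝ) 1, (G.dg t / G.g t) ^ 2 * (1 - t ^ 2) * gtilde p G.toAngFn t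

/-- `ℐ_p(g)`. -/
def scoreI (p : ℕ) (G : GaFn p) : ℝ :=
  ∫ t in Set.Ioo (-1 : ℝ) 1, (G.dg t / G.g t) * Real.sqrt (1 - t ^ 2) * gtilde p G.toAngFn t

/-- The chi-square distribution with `k` degrees of freedom. -/
def chiSq (k : ℕ) : Measure ℝ :=
  Measure.map (fun z : Fin k → ℝ => ∑ i, (z i) ^ 2) (Measure.pi fun _ => gaussianReal 0 1)

/-- The noncentral chi-square distribution with `k` degrees of freedom and noncentrality `lam`. -/
def ncChiSq (k : ℕ) (lam : ℝ) : Measure ℝ :=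
  Measure.map (fun z : Fin k → ℝ => ∑ i, (z i + if (i : ℕ) = 0 then Real.sqrt lam else 0) ^ 2)
    (Measure.pi fun _ => gaussianReal 0 1)

/-- The location statistic `Q_θ^{loc}`. -/
def Qloc (p n : ℕ) (Γ : Matrix (Fin p) (Fin (p - 1)) ℝ) (x : Fin n → Euc p) : ℝ :=
  (n : ℝ) * ((p : ℝ) - 1) * ‖(n : ℝ)⁻¹ • ∑ i, uSign Γ (x i)‖ ^ 2

/-- The matrix `S_θ`. -/
def Smat (p n : ℕ) (Γ : Matrix (Fin p) (Fin (p - 1)) ℝ) (x : Fin n → Euc p) :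
    Matrix (Fin (p - 1)) (Fin (p - 1)) ℝ :=
  (n : ℝ)⁻¹ • ∑ i, vecMulVec (fun a => uSign Γ (x i) a) (fun a => uSign Γ (x i) a)

/-- The scatter statistic `Q_θ^{sc}`. -/
def Qsc (p n : ℕ) (Γ : Matrix (Fin p) (Fin (p - 1)) ℝ) (x : Fin n → Euc p) : ℝ :=
  ((n : ℝ) * ((p : ℝ) ^ 2 - 1) / 2) *
    (Matrix.trace (Smat p n Γ x * Smat p n Γ x) - 1 / ((p : ℝ) - 1))

/-- Convergence in distribution of real statistics computed from samples. -/
def TendstoInDistrib {Ω : ℕ → Type} [∀ n, MeasurableSpace (Ω n)]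
    (P : ∀ n, Measure (Ω n)) (T : ∀ n, Ω n → ℝ) (ν : Measure ℝ) : Prop :=
  ∀ f : BoundedContinuousFunction ℝ ℝ,
    Tendsto (fun n => ∫ x, f (T n x) ∂(P n)) atTop (nhds (∫ y, f y ∂ν))

/-- The tangent elliptical law `TE_p(θ, g, Λ)` (relative to a tangent frame `Γ`). -/
def TElaw (p : ℕ) (θ : Euc p) (Γ : Matrix (Fin p) (Fin (p - 1)) ℝ) (G : AngFn p)
    (Λ : Matrix (Fin (p - 1)) (Fin (p - 1)) ℝ) : Measure (Euc p) :=
  Measure.map (fun vu : ℝ × Euc (p - 1) =>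
      vu.1 • θ + Real.sqrt (1 - vu.1 ^ 2) • mulVecE Γ vu.2)
    (((volume.restrict (Set.Icc (-1 : ℝ) 1)).withDensity fun v =>
        ENNReal.ofReal (gtilde p G v)).prod
      ((sphereMeasure (p - 1)).withDensity fun u =>
        ENNReal.ofReal (cACG p Λ * quadForm Λ⁻¹ u ^ (-(((p : ℝ) - 1) / 2)))))

/-- The tangent vMF law `TM_p(θ, g, μ, κ)` (relative to a tangent frame `Γ`). -/
def TMlaw (p : ℕ) (θ : Euc p) (Γ : Matrix (Fin p) (Fin (p - 1)) ℝ) (G : AngFn p)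
    (μ : Euc (p - 1)) (κ : ℝ) : Measure (Euc p) :=
  Measure.map (fun vu : ℝ × Euc (p - 1) =>
      vu.1 • θ + Real.sqrt (1 - vu.1 ^ 2) • mulVecE Γ vu.2)
    (((volume.restrict (Set.Icc (-1 : ℝ) 1)).withDensity fun v =>
        ENNReal.ofReal (gtilde p G v)).prod
      ((sphereMeasure (p - 1)).withDensity fun u =>
        ENNReal.ofReal (cvMF p μ κ * Real.exp (κ * ⟪μ, u⟫))))


/-- The tangent-normal map `(v, u) ↦ v θ + √(1-v²) Γ_θ u`. -/
def tnMap (p : ℕ) (θ : Euc p) (Γ : Matrix (Fin p) (Fin (p - 1)) ℝ)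
    (vu : ℝ × Euc (p - 1)) : Euc p :=
  vu.1 • θ + Real.sqrt (1 - vu.1 ^ 2) • mulVecE Γ vu.2

/-- The uniform probability measure `σ_{p-2}/ω_{p-1}` on the unit sphere of `ℝ^{p-1}`. -/
def unifSign (p : ℕ) : Measure (Euc (p - 1)) :=
  (ENNReal.ofReal (omegaS (p - 1)))⁻¹ • sphereMeasure (p - 1)

/-! With `w = g̃_p`, a probability density on `(-1, 1)`, and `f(t) = φ_g(t) √(1 - t²)`, the
quantities `ℐ_p(g)` and `𝒥_p(g)` are the first two moments of `f` under `w`, so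
`𝒥_p(g) - ℐ_p(g)² = ∫ (f - ℐ_p(g))² w` is a variance. As `w > 0` on `(-1, 1)`, equality means
`f = κ` a.e., i.e. `ġ = κ g / √(1 - t²)` a.e.; since `g` is absolutely continuous and the right
side is continuous, this holds classically on `(-1, 1)`, so `g · exp (-κ arcsin)` is constant.
Conversely, for `g = C exp (κ arcsin)` the Lebesgue differentiation theorem identifies `ġ` a.e.
with the classical derivative, so `f = κ` a.e. -/

section WeightedMoments

variable {α : Type*} [MeasurableSpace α] {μ : Measure α} {w f : α → ℝ}

theorem integrable_mul_of_integrable_sq_mul (hw : 0 ≤ᵐ[μ] w) (hwi : Integrable w μ)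
    (hf : AEStronglyMeasurable f μ) (hf2 : Integrable (fun x => f x ^ 2 * w x) μ) :
    Integrable (fun x => f x * w x) μ := by
  refine ((hf2.add hwi).div_const 2).mono' (hf.mul hwi.aestronglyMeasurable) ?_
  filter_upwards [hw] with x hx
  rw [Real.norm_eq_abs, abs_mul, abs_of_nonneg hx, Pi.add_apply]
  have hamgm : 2 * |f x| ≤ f x ^ 2 + 1 := by nlinarith [sq_nonneg (|f x| - 1), sq_abs (f x)]
  nlinarith [mul_le_mul_of_nonneg_right hamgm hx]

theorem integral_sub_sq_mul (hwi : Integrable w μ) (hw1 : ∫ x, w x ∂μ = 1)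
    (hfw : Integrable (fun x => f x * w x) μ) (hf2 : Integrable (fun x => f x ^ 2 * w x) μ)
    (c : ℝ) :
    ∫ x, (f x - c) ^ 2 * w x ∂μ = ∫ x, f x ^ 2 * w x ∂μ - 2 * c * ∫ x, f x * w x ∂μ + c ^ 2 := by
  have hexp : (fun x => (f x - c) ^ 2 * w x)
      = fun x => f x ^ 2 * w x - 2 * c * (f x * w x) + c ^ 2 * w x := by
    funext x; ring
  have hcross : Integrable (fun x => 2 * c * (f x * w x)) μ := hfw.const_mul _
  have hdiff : Integrable (fun x => f x ^ 2 * w x - 2 * c * (f x * w x)) μ := hf2.sub hcross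
  rw [hexp, integral_add hdiff (hwi.const_mul _), integral_sub hf2 hcross,
    integral_const_mul, integral_const_mul, hw1, mul_one]

theorem integrable_sub_sq_mul (hwi : Integrable w μ) (hfw : Integrable (fun x => f x * w x) μ)
    (hf2 : Integrable (fun x => f x ^ 2 * w x) μ) (c : ℝ) :
    Integrable (fun x => (f x - c) ^ 2 * w x) μ := by
  have hexp : (fun x => (f x - c) ^ 2 * w x)
      = fun x => f x ^ 2 * w x - 2 * c * (f x * w x) + c ^ 2 * w x := by
    funext x; ring
  rw [hexp]
  exact (hf2.sub (hfw.const_mul _)).add (hwi.const_mul _)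

theorem sq_integral_mul_le (hw : 0 ≤ᵐ[μ] w) (hwi : Integrable w μ) (hw1 : ∫ x, w x ∂μ = 1)
    (hfw : Integrable (fun x => f x * w x) μ) (hf2 : Integrable (fun x => f x ^ 2 * w x) μ) :
    (∫ x, f x * w x ∂μ) ^ 2 ≤ ∫ x, f x ^ 2 * w x ∂μ := by
  have hvar : 0 ≤ ∫ x, (f x - ∫ y, f y * w y ∂μ) ^ 2 * w x ∂μ :=
    integral_nonneg_of_ae (by filter_upwards [hw] with x hx using mul_nonneg (sq_nonneg _) hx)
  rw [integral_sub_sq_mul hwi hw1 hfw hf2] at hvar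
  linarith

theorem sq_integral_mul_eq_iff (hw : ∀ᵐ x ∂μ, 0 < w x) (hwi : Integrable w μ)
    (hw1 : ∫ x, w x ∂μ = 1) (hfw : Integrable (fun x => f x * w x) μ)
    (hf2 : Integrable (fun x => f x ^ 2 * w x) μ) :
    (∫ x, f x * w x ∂μ) ^ 2 = ∫ x, f x ^ 2 * w x ∂μ ↔ ∃ c, ∀ᵐ x ∂μ, f x = c := by
  constructor
  · intro heq
    set m := ∫ x, f x * w x ∂μ
    have hvar : ∫ x, (f x - m) ^ 2 * w x ∂μ = 0 := by
      rw [integral_sub_sq_mul hwi hw1 hfw hf2, ← heq]; ring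
    have hnn : 0 ≤ᵐ[μ] fun x => (f x - m) ^ 2 * w x := by
      filter_upwards [hw] with x hx using mul_nonneg (sq_nonneg _) hx.le
    rw [integral_eq_zero_iff_of_nonneg_ae hnn (integrable_sub_sq_mul hwi hfw hf2 m)] at hvar
    refine ⟨m, ?_⟩
    filter_upwards [hvar, hw] with x hx hwx
    have : (f x - m) ^ 2 = 0 := (mul_eq_zero.mp hx).resolve_right hwx.ne'
    exact sub_eq_zero.mp (pow_eq_zero_iff two_ne_zero |>.mp this)
  · rintro ⟨c, hc⟩
    have hm : ∀ n : ℕ, ∫ x, f x ^ n * w x ∂μ = c ^ n := fun n => by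
      rw [integral_congr_ae (hc.mono fun x hx => by rw [hx]), integral_const_mul, hw1, mul_one]
    have hmean := hm 1
    simp only [pow_one] at hmean
    rw [hmean, hm 2]

theorem hasDerivAt_exp_mul_arcsin (κ : ℝ) {x : ℝ} (hx : x ∈ Ioo (-1 : ℝ) 1) :
    HasDerivAt (fun y => exp (κ * arcsin y)) (κ * exp (κ * arcsin x) / √(1 - x ^ 2)) x := by
  convert ((hasDerivAt_arcsin hx.1.ne' hx.2.ne).const_mul κ).exp using 1
  ring

theorem eq_mul_exp_mul_arcsin_of_hasDerivAt {g : ℝ → ℝ} {κ : ℝ}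
    (hc : ContinuousOn g (Icc (-1) 1))
    (hd : ∀ x ∈ Ioo (-1 : ℝ) 1, HasDerivAt g (κ * g x / √(1 - x ^ 2)) x) :
    ∀ t ∈ Icc (-1 : ℝ) 1, g t = g 0 * exp (κ * arcsin t) := by
  set h : ℝ → ℝ := fun y => g y * exp (-κ * arcsin y)
  have hh : ContinuousOn h (Icc (-1) 1) :=
    hc.mul (continuous_const.mul continuous_arcsin).rexp.continuousOn
  have hh' : ∀ x ∈ interior (Icc (-1 : ℝ) 1), HasDerivWithinAt h 0 (interior (Icc (-1) 1)) x := by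
    rw [interior_Icc]
    intro x hx
    refine (((hd x hx).mul (hasDerivAt_exp_mul_arcsin (-κ) hx)).congr_deriv ?_).hasDerivWithinAt
    ring
  have hmono := monotoneOn_of_hasDerivWithinAt_nonneg (convex_Icc _ _) hh hh' fun _ _ => le_rfl
  have hanti := antitoneOn_of_hasDerivWithinAt_nonpos (convex_Icc _ _) hh hh' fun _ _ => le_rfl
  intro t ht
  have h0 : (0 : ℝ) ∈ Icc (-1 : ℝ) 1 := by norm_num
  have hconst : h t = h 0 := by
    rcases le_total t 0 with hle | hle
    · exact le_antisymm (hmono ht h0 hle) (hanti ht h0 hle)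
    · exact le_antisymm (hanti h0 ht hle) (hmono h0 ht hle)
  simp only [h, arcsin_zero, mul_zero, exp_zero, mul_one] at hconst
  rw [← hconst, mul_assoc, ← exp_add, neg_mul, neg_add_cancel, exp_zero, mul_one]

theorem omegaS_pos {q : ℕ} (hq : q ≠ 0) : 0 < omegaS q := by
  have := Gamma_pos_of_pos (by positivity : (0 : ℝ) < q / 2)
  unfold omegaS
  positivity

namespace AngFn

variable {p : ℕ} (G : AngFn p)

theorem gtilde_eq (v : ℝ) :
    gtilde p G v = omegaS (p - 1) * cpg p G * ((1 - v ^ 2) ^ (((p : ℝ) - 3) / 2) * G.g v) := by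
  rw [gtilde, mul_assoc]

theorem omegaS_mul_cpg (hp : 2 ≤ p) : omegaS (p - 1) * cpg p G =
    (∫ v in Ioo (-1 : ℝ) 1, (1 - v ^ 2) ^ (((p : ℝ) - 3) / 2) * G.g v)⁻¹ := by
  rw [cpg, mul_inv, ← mul_assoc, mul_inv_cancel₀ (omegaS_pos (by omega)).ne', one_mul]

theorem integrableOn_gtilde : IntegrableOn (gtilde p G) (Ioo (-1) 1) := by
  have h := G.integrable.const_mul (omegaS (p - 1) * cpg p G)
  simp only [← gtilde_eq] at h
  exact h

theorem integral_gtilde (hp : 2 ≤ p) : ∫ v in Ioo (-1 : ℝ) 1, gtilde p G v = 1 := by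
  simp_rw [G.gtilde_eq, integral_const_mul, G.omegaS_mul_cpg hp]
  exact inv_mul_cancel₀ G.pos.ne'

theorem gtilde_pos (hp : 2 ≤ p) {v : ℝ} (hv : v ∈ Ioo (-1 : ℝ) 1) (hg : 0 < G.g v) :
    0 < gtilde p G v := by
  have h1 : 0 < 1 - v ^ 2 := by nlinarith [hv.1, hv.2]
  rw [G.gtilde_eq, G.omegaS_mul_cpg hp]
  exact mul_pos (inv_pos.2 G.pos) (mul_pos (rpow_pos_of_pos h1 _) hg)

end AngFn

namespace GaFn

variable {p : ℕ} (G : GaFn p)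

theorem intervalIntegrable_dg {x : ℝ} (hx : x ∈ Icc (-1 : ℝ) 1) :
    IntervalIntegrable G.dg volume (-1) x :=
  G.dg_intervalIntegrable.mono_set
    (uIcc_subset_uIcc left_mem_uIcc (by rwa [uIcc_of_le (by norm_num : (-1 : ℝ) ≤ 1)]))

theorem integral_dg_eq_sub {a b : ℝ} (ha : a ∈ Icc (-1 : ℝ) 1) (hb : b ∈ Icc (-1 : ℝ) 1) :
    ∫ t in a..b, G.dg t = G.g b - G.g a := by
  rw [← intervalIntegral.integral_interval_sub_left (G.intervalIntegrable_dg hb)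
    (G.intervalIntegrable_dg ha), G.abs_cont b hb, G.abs_cont a ha]
  ring

theorem continuousOn_g : ContinuousOn G.g (Icc (-1) 1) := by
  have h := continuousOn_const (c := G.g (-1)) |>.add
    (intervalIntegral.continuousOn_primitive_interval' G.dg_intervalIntegrable left_mem_uIcc)
  rw [uIcc_of_le (by norm_num : (-1 : ℝ) ≤ 1)] at h
  exact h.congr G.abs_cont

theorem hasDerivAt_of_ae_eq {φ : ℝ → ℝ} (hφ : ∀ᵐ t, t ∈ Ioo (-1 : ℝ) 1 → G.dg t = φ t)
    (hφc : ContinuousOn φ (Ioo (-1) 1)) {x : ℝ} (hx : x ∈ Ioo (-1 : ℝ) 1) :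
    HasDerivAt G.g (φ x) x := by
  have hprim : HasDerivAt (fun y => ∫ t in x..y, φ t) (φ x) x :=
    intervalIntegral.integral_hasDerivAt_right IntervalIntegrable.refl
      (hφc.stronglyMeasurableAtFilter isOpen_Ioo x hx)
      (hφc.continuousAt (Ioo_mem_nhds hx.1 hx.2))
  refine (hprim.const_add (G.g x)).congr_of_eventuallyEq ?_
  filter_upwards [Ioo_mem_nhds hx.1 hx.2] with y hy
  have hdgφ : ∫ t in x..y, G.dg t = ∫ t in x..y, φ t := by
    refine intervalIntegral.integral_congr_ae ?_
    filter_upwards [hφ] with t ht htxy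
    exact ht (ordConnected_Ioo.uIcc_subset hx hy (uIoc_subset_uIcc htxy))
  rw [← hdgφ, G.integral_dg_eq_sub (Ioo_subset_Icc_self hx) (Ioo_subset_Icc_self hy)]
  ring

theorem ae_hasDerivAt_dg : ∀ᵐ x, x ∈ Ioo (-1 : ℝ) 1 → HasDerivAt G.g (G.dg x) x := by
  filter_upwards [G.dg_intervalIntegrable.ae_hasDerivAt_integral] with x hx hxI
  have hxu : x ∈ uIcc (-1 : ℝ) 1 := by
    rw [uIcc_of_le (by norm_num : (-1 : ℝ) ≤ 1)]
    exact Ioo_subset_Icc_self hxI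
  refine ((hx hxu (-1) left_mem_uIcc).const_add (G.g (-1))).congr_of_eventuallyEq ?_
  filter_upwards [Ioo_mem_nhds hxI.1 hxI.2] with y hy using G.abs_cont y (Ioo_subset_Icc_self hy)

def scaledScore (t : ℝ) : ℝ := G.dg t / G.g t * √(1 - t ^ 2)

theorem measurable_scaledScore : Measurable G.scaledScore :=
  (G.dg_meas.div G.meas).mul (measurable_const.sub (measurable_id.pow_const 2)).sqrt

theorem scaledScore_sq {t : ℝ} (ht : t ∈ Ioo (-1 : ℝ) 1) :
    G.scaledScore t ^ 2 = (G.dg t / G.g t) ^ 2 * (1 - t ^ 2) := by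
  rw [scaledScore, mul_pow, sq_sqrt (by nlinarith [ht.1, ht.2])]

theorem scaledScore_eq_iff {t : ℝ} (ht : t ∈ Ioo (-1 : ℝ) 1) (κ : ℝ) :
    G.scaledScore t = κ ↔ G.dg t = κ * G.g t / √(1 - t ^ 2) := by
  have hg := (G.gpos t (Ioo_subset_Icc_self ht)).ne'
  have hs := (sqrt_pos.2 (by nlinarith [ht.1, ht.2] : (0 : ℝ) < 1 - t ^ 2)).ne'
  rw [scaledScore, eq_div_iff hs, div_mul_eq_mul_div, div_eq_iff hg]

theorem ae_scaledScore_eq_iff (κ : ℝ) :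
    (∀ᵐ t ∂volume.restrict (Ioo (-1 : ℝ) 1), G.scaledScore t = κ) ↔
      ∃ C > 0, ∀ t ∈ Icc (-1 : ℝ) 1, G.g t = C * exp (κ * arcsin t) := by
  rw [ae_restrict_iff' measurableSet_Ioo]
  constructor
  · intro h
    have hφc : ContinuousOn (fun t => κ * G.g t / √(1 - t ^ 2)) (Ioo (-1) 1) :=
      (continuousOn_const.mul (G.continuousOn_g.mono Ioo_subset_Icc_self)).div
        (by fun_prop) fun t ht => (sqrt_pos.2 (by nlinarith [ht.1, ht.2])).ne'
    have hφ : ∀ᵐ t, t ∈ Ioo (-1 : ℝ) 1 → G.dg t = κ * G.g t / √(1 - t ^ 2) := by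
      filter_upwards [h] with t ht htI using (G.scaledScore_eq_iff htI κ).1 (ht htI)
    exact ⟨G.g 0, G.gpos 0 (by norm_num), eq_mul_exp_mul_arcsin_of_hasDerivAt G.continuousOn_g
      fun x hx => G.hasDerivAt_of_ae_eq hφ hφc hx⟩
  · rintro ⟨C, -, hC⟩
    have hderiv : ∀ x ∈ Ioo (-1 : ℝ) 1, HasDerivAt G.g (κ * G.g x / √(1 - x ^ 2)) x := by
      intro x hx
      have h := ((hasDerivAt_exp_mul_arcsin κ hx).const_mul C).congr_of_eventuallyEq
        (Filter.eventuallyEq_of_mem (Ioo_mem_nhds hx.1 hx.2) fun y hy =>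
          hC y (Ioo_subset_Icc_self hy))
      rw [hC x (Ioo_subset_Icc_self hx)]
      exact h.congr_deriv (by ring)
    filter_upwards [G.ae_hasDerivAt_dg] with x hx hxI
    exact (G.scaledScore_eq_iff hxI κ).2 ((hx hxI).unique (hderiv x hxI))

theorem integrableOn_scaledScore_sq_mul_gtilde :
    IntegrableOn (fun t => G.scaledScore t ^ 2 * gtilde p G.toAngFn t) (Ioo (-1) 1) := by
  refine IntegrableOn.congr_fun
    (G.score_sq_integrable.const_mul (omegaS (p - 1) * cpg p G.toAngFn)) (fun t ht => ?_)
    measurableSet_Ioo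
  rw [G.scaledScore_sq ht, G.gtilde_eq]
  ring

theorem scoreI_eq_integral :
    scoreI p G = ∫ t in Ioo (-1 : ℝ) 1, G.scaledScore t * gtilde p G.toAngFn t :=
  rfl

theorem scoreJ_eq_integral :
    scoreJ p G = ∫ t in Ioo (-1 : ℝ) 1, G.scaledScore t ^ 2 * gtilde p G.toAngFn t :=
  setIntegral_congr_fun measurableSet_Ioo fun t ht => by rw [G.scaledScore_sq ht]

end GaFn

/-- Jensen inequality `ℐ_p(g)² ≤ 𝒥_p(g)` with equality characterization. -/
theorem scoreI_sq_le_scoreJ (p : ℕ) (hp : 3 ≤ p) (G : GaFn p) :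
    scoreI p G ^ 2 ≤ scoreJ p G ∧
    (scoreI p G ^ 2 = scoreJ p G ↔
      ∃ C > (0 : ℝ), ∃ κ : ℝ, ∀ t ∈ Set.Icc (-1 : ℝ) 1,
        G.g t = C * Real.exp (κ * Real.arcsin t)) := by
  have hp2 : 2 ≤ p := by omega
  have hw : ∀ᵐ t ∂volume.restrict (Ioo (-1 : ℝ) 1), 0 < gtilde p G.toAngFn t :=
    (ae_restrict_iff' measurableSet_Ioo).2 <| ae_of_all _ fun t ht =>
      G.gtilde_pos hp2 ht (G.gpos t (Ioo_subset_Icc_self ht))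
  have hw0 : 0 ≤ᵐ[volume.restrict (Ioo (-1 : ℝ) 1)] gtilde p G.toAngFn := hw.mono fun _ h => h.le
  have hwi := G.integrableOn_gtilde
  have hw1 := G.integral_gtilde hp2
  have hf2 := G.integrableOn_scaledScore_sq_mul_gtilde
  have hfw := integrable_mul_of_integrable_sq_mul hw0 hwi
    G.measurable_scaledScore.aestronglyMeasurable hf2
  rw [G.scoreI_eq_integral, G.scoreJ_eq_integral, sq_integral_mul_eq_iff hw hwi hw1 hfw hf2]
  refine ⟨sq_integral_mul_le hw0 hwi hw1 hfw hf2, ?_⟩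
  simp only [G.ae_scaledScore_eq_iff]
  exact ⟨fun ⟨κ, C, hC, h⟩ => ⟨C, hC, κ, h⟩, fun ⟨C, hC, κ, h⟩ => ⟨κ, C, hC, h⟩⟩
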